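/- Let Σ be a symmetric positive definite real p×p matrix, β : [0,1] → ℝ^p a continuous function, and β₀ ∈ ℝ^p. Suppose that for each n we are given an integer k_n with k_n → ∞ as n → ∞, symmetric positive definite real p×p matrices V_{n,1}, …, V_{n,k_n} such that sup_{n, i ≤ k_n} ‖V_{n,i}^{-1/2}‖ ≤ K for some finite K and max_{i ≤ k_n} ‖V_{n,i}^{1/2} − Σ^{1/2}‖ → 0 as n → ∞, reals M_n ≥ 0 with M_n → 0, and vectors d_{n,1}, …, d_{n,k_n} ∈ ℝ^p satisfying ‖d_{n,i} − V_{n,i}(β(i/k_n) − β₀)‖ ≤ (M_n/2)·‖β(i/k_n) − β₀‖² for every i ≤ k_n. Then sup_{t ∈ [0,1]} ‖ (1/k_n) Σ_{i=1}^{⌊t·k_n⌋} V_{n,i}^{-1/2} d_{n,i} − Σ^{1/2} ∫₀ᵗ (β(s) − β₀) ds ‖ → 0 as n → ∞. -/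

import Mathlib

/-!
Write `x = β - β₀`. Since `W⁻¹ V = W`, each summand splits as
`W⁻¹ d = W⁻¹ (d - V x(i/k)) + (W - S) x(i/k) + S x(i/k)`.
The first two terms are small uniformly in `i ≤ k` (`‖W⁻¹‖ ≤ K` with `M → 0`, resp. `W → S`,
and `x` is bounded on `[0,1]`), so their averages over `i ≤ ⌊t k⌋` tend to zero uniformly in `t`.
The last term averages to `S` applied to a Riemann sum of `x`, which converges to `∫₀ᵗ x`
uniformly in `t` because `x` is uniformly continuous on `[0,1]`.
-/

open Filter MeasureTheory

theorem Nat.floor_mul_natCast_le_of_le_one {t : ℝ} (ht : t ≤ 1) (k : ℕ) : ⌊t * k⌋₊ ≤ k :=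
  Nat.floor_le_of_le (mul_le_of_le_one_left k.cast_nonneg ht)

section Averages

variable {E : Type*} [SeminormedAddCommGroup E] [NormedSpace ℝ E]

theorem norm_inv_natCast_smul_sum_Icc_le {a : ℕ → E} {k m : ℕ} {c : ℝ} (hmk : m ≤ k)
    (hc : 0 ≤ c) (ha : ∀ i ∈ Finset.Icc 1 m, ‖a i‖ ≤ c) :
    ‖(k : ℝ)⁻¹ • ∑ i ∈ Finset.Icc 1 m, a i‖ ≤ c := by
  have hsum : ‖∑ i ∈ Finset.Icc 1 m, a i‖ ≤ m * c := by
    simpa using norm_sum_le_of_le _ ha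
  calc ‖(k : ℝ)⁻¹ • ∑ i ∈ Finset.Icc 1 m, a i‖ ≤ (k : ℝ)⁻¹ * (m * c) := by
        rw [norm_smul, norm_inv, Real.norm_natCast]
        gcongr
    _ = ((k : ℝ)⁻¹ * m) * c := by ring
    _ ≤ 1 * c := by gcongr; exact inv_mul_le_one_of_le₀ (by exact_mod_cast hmk) k.cast_nonneg
    _ = c := one_mul c

theorem tendstoUniformlyOn_average_of_eventually_norm_le {ι : Type*} {l : Filter ι}
    {k : ι → ℕ} {a : ι → ℕ → E}
    (ha : ∀ ε > 0, ∀ᶠ n in l, ∀ i, 1 ≤ i → i ≤ k n → ‖a n i‖ ≤ ε) :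
    TendstoUniformlyOn (fun n t => (k n : ℝ)⁻¹ • ∑ i ∈ Finset.Icc 1 ⌊t * (k n : ℝ)⌋₊, a n i)
      0 l (Set.Icc 0 1) := by
  rw [Metric.tendstoUniformlyOn_iff]
  intro ε hε
  filter_upwards [ha (ε / 2) (half_pos hε)] with n hn t ht
  have hm := Nat.floor_mul_natCast_le_of_le_one ht.2 (k n)
  rw [Pi.zero_apply, dist_zero_left]
  refine (norm_inv_natCast_smul_sum_Icc_le hm (half_pos hε).le fun i hi => ?_).trans_lt
    (half_lt_self hε)
  rw [Finset.mem_Icc] at hi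
  exact hn i hi.1 (hi.2.trans hm)

end Averages

section RiemannSums

variable {E : Type*} [NormedAddCommGroup E]

theorem ContinuousOn.intervalIntegrable_of_mem_Icc {f : ℝ → E} {a b c d : ℝ}
    (hf : ContinuousOn f (Set.Icc a b)) (hc : c ∈ Set.Icc a b) (hd : d ∈ Set.Icc a b) :
    IntervalIntegrable f volume c d :=
  (hf.mono (Set.uIcc_subset_Icc hc hd)).intervalIntegrable

variable [NormedSpace ℝ E] [CompleteSpace E]

theorem norm_smul_sub_integral_le {f : ℝ → E} {a b η : ℝ} (hab : a ≤ b)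
    (hf : IntervalIntegrable f volume a b) (h : ∀ s ∈ Set.Ioc a b, ‖f b - f s‖ ≤ η) :
    ‖(b - a) • f b - ∫ s in a..b, f s‖ ≤ η * (b - a) := by
  rw [← intervalIntegral.integral_const, ← intervalIntegral.integral_sub intervalIntegrable_const hf]
  refine (intervalIntegral.norm_integral_le_of_norm_le_const ?_).trans_eq
    (by rw [abs_of_nonneg (sub_nonneg.2 hab)])
  rwa [Set.uIoc_of_le hab]

variable {f : ℝ → E} {N : ℕ} {η : ℝ}

theorem norm_riemannSum_sub_integral_le (hf : ContinuousOn f (Set.Icc 0 1))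
    (hη : ∀ s ∈ Set.Icc (0 : ℝ) 1, ∀ s' ∈ Set.Icc (0 : ℝ) 1,
      dist s s' ≤ (N : ℝ)⁻¹ → dist (f s) (f s') ≤ η) :
    ∀ m ≤ N, ‖(N : ℝ)⁻¹ • ∑ i ∈ Finset.Icc 1 m, f (i / N) - ∫ s in (0 : ℝ)..m / N, f s‖
      ≤ m * η / N := by
  intro m
  induction m with
  | zero => simp
  | succ m ih =>
    intro hm
    have hN : (0 : ℝ) < N := by exact_mod_cast (Nat.succ_pos m).trans_le hm
    have hmN : (m : ℝ) + 1 ≤ N := by exact_mod_cast hm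
    set a : ℝ := m / N
    set b : ℝ := (m + 1) / N
    have ha : a ∈ Set.Icc (0 : ℝ) 1 := ⟨by positivity, by rw [div_le_one hN]; linarith⟩
    have hb : b ∈ Set.Icc (0 : ℝ) 1 := ⟨by positivity, by rwa [div_le_one hN]⟩
    have hba : b - a = (N : ℝ)⁻¹ := by simp only [a, b]; field_simp; ring
    have hab : a ≤ b := by linarith [inv_pos.2 hN]
    have hcell : ‖(b - a) • f b - ∫ s in a..b, f s‖ ≤ η * (b - a) := by
      refine norm_smul_sub_integral_le hab (hf.intervalIntegrable_of_mem_Icc ha hb)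
        fun s hs => ?_
      have hs' : s ∈ Set.Icc (0 : ℝ) 1 := ⟨ha.1.trans hs.1.le, hs.2.trans hb.2⟩
      rw [← dist_eq_norm]
      refine hη b hb s hs' ?_
      rw [Real.dist_eq, abs_of_nonneg (by linarith [hs.2]), ← hba]
      linarith [hs.1]
    have hsplit : ∫ s in (0 : ℝ)..b, f s = (∫ s in (0 : ℝ)..a, f s) + ∫ s in a..b, f s :=
      (intervalIntegral.integral_add_adjacent_intervals
        (hf.intervalIntegrable_of_mem_Icc ⟨le_rfl, zero_le_one⟩ ha)
        (hf.intervalIntegrable_of_mem_Icc ha hb)).symm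
    have hdecomp : (N : ℝ)⁻¹ • ∑ i ∈ Finset.Icc 1 (m + 1), f (i / N) - ∫ s in (0 : ℝ)..b, f s
        = ((N : ℝ)⁻¹ • ∑ i ∈ Finset.Icc 1 m, f (i / N) - ∫ s in (0 : ℝ)..a, f s)
          + ((b - a) • f b - ∫ s in a..b, f s) := by
      rw [Finset.sum_Icc_succ_top (Nat.le_add_left 1 m), smul_add, hsplit, hba]
      push_cast
      abel
    push_cast
    rw [hdecomp]
    calc _ ≤ m * η / N + η * (b - a) := (norm_add_le _ _).trans (add_le_add (ih (by omega)) hcell)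
      _ = (m + 1) * η / N := by rw [hba]; ring

theorem norm_riemannSum_floor_sub_integral_le (hf : ContinuousOn f (Set.Icc 0 1)) (hN : 0 < N)
    (hη : ∀ s ∈ Set.Icc (0 : ℝ) 1, ∀ s' ∈ Set.Icc (0 : ℝ) 1,
      dist s s' ≤ (N : ℝ)⁻¹ → dist (f s) (f s') ≤ η)
    {B : ℝ} (hB : ∀ s ∈ Set.Icc (0 : ℝ) 1, ‖f s‖ ≤ B) {t : ℝ} (ht : t ∈ Set.Icc (0 : ℝ) 1) :
    ‖(N : ℝ)⁻¹ • ∑ i ∈ Finset.Icc 1 ⌊t * (N : ℝ)⌋₊, f (i / N) - ∫ s in (0 : ℝ)..t, f s‖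
      ≤ η + B / N := by
  have hN' : (0 : ℝ) < N := by exact_mod_cast hN
  have h0 : (0 : ℝ) ∈ Set.Icc (0 : ℝ) 1 := ⟨le_rfl, zero_le_one⟩
  have hη0 : 0 ≤ η := by simpa using hη 0 h0 0 h0 (by simp)
  set m := ⌊t * (N : ℝ)⌋₊
  have hmN : m ≤ N := Nat.floor_mul_natCast_le_of_le_one ht.2 N
  have hmt : (m : ℝ) / N ≤ t := by
    rw [div_le_iff₀ hN']
    exact Nat.floor_le (mul_nonneg ht.1 hN'.le)
  have htm : t - m / N ≤ (N : ℝ)⁻¹ := by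
    have := Nat.lt_floor_add_one (t * N)
    rw [sub_le_iff_le_add, ← one_div, ← add_div, le_div_iff₀ hN']
    linarith
  have hm : (m : ℝ) / N ∈ Set.Icc (0 : ℝ) 1 := ⟨by positivity, hmt.trans ht.2⟩
  have hgrid : m * η / N ≤ η := by
    rw [div_le_iff₀ hN', mul_comm η]
    exact mul_le_mul_of_nonneg_right (Nat.cast_le.2 hmN) hη0
  have htail : ‖∫ s in (m / N : ℝ)..t, f s‖ ≤ B / N := by
    refine (intervalIntegral.norm_integral_le_of_norm_le_const fun s hs => hB s ?_).trans ?_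
    · rw [Set.uIoc_of_le hmt] at hs
      exact ⟨hm.1.trans hs.1.le, hs.2.trans ht.2⟩
    · rw [abs_of_nonneg (sub_nonneg.2 hmt), div_eq_mul_inv]
      exact mul_le_mul_of_nonneg_left htm ((norm_nonneg _).trans (hB 0 h0))
  rw [← intervalIntegral.integral_add_adjacent_intervals
    (hf.intervalIntegrable_of_mem_Icc h0 hm) (hf.intervalIntegrable_of_mem_Icc hm ht), ← sub_sub]
  calc _ ≤ m * η / N + B / N :=
        (norm_sub_le _ _).trans (add_le_add (norm_riemannSum_sub_integral_le hf hη m hmN) htail)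
    _ ≤ η + B / N := by gcongr

theorem tendstoUniformlyOn_riemannSum_sub_integral (hf : ContinuousOn f (Set.Icc 0 1))
    {ι : Type*} {l : Filter ι} {k : ι → ℕ} (hk : Tendsto k l atTop) :
    TendstoUniformlyOn (fun n t => (k n : ℝ)⁻¹ • ∑ i ∈ Finset.Icc 1 ⌊t * (k n : ℝ)⌋₊,
      f (i / k n) - ∫ s in (0 : ℝ)..t, f s) 0 l (Set.Icc 0 1) := by
  obtain ⟨B, hB⟩ := isCompact_Icc.exists_bound_of_continuousOn hf
  rw [Metric.tendstoUniformlyOn_iff]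
  intro ε hε
  obtain ⟨δ, hδ, hfδ⟩ := Metric.uniformContinuousOn_iff_le.1
    (isCompact_Icc.uniformContinuousOn_of_continuous hf) (ε / 2) (half_pos hε)
  have hinv : Tendsto (fun n => (k n : ℝ)⁻¹) l (nhds 0) :=
    tendsto_inv_atTop_zero.comp (tendsto_natCast_atTop_atTop.comp hk)
  have hBinv := hinv.const_mul B
  rw [mul_zero] at hBinv
  filter_upwards [hk.eventually_gt_atTop 0, hinv.eventually_le_const hδ,
    hBinv.eventually_lt_const (half_pos hε)] with n hn hnδ hnB t ht
  rw [Pi.zero_apply, dist_zero_left]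
  calc _ ≤ ε / 2 + B / k n := norm_riemannSum_floor_sub_integral_le hf hn
        (fun s hs s' hs' h => hfδ s hs s' hs' (h.trans hnδ)) hB ht
    _ < ε := by linarith [div_eq_mul_inv B (k n : ℝ)]

end RiemannSums

section MatrixSquareRoot

variable {n : Type*} [Fintype n] [DecidableEq n]

theorem Matrix.inv_mul_eq_of_mul_self_eq {α : Type*} [CommRing α] {W V : Matrix n n α}
    (hW : W * W = V) (hV : IsUnit V) : W⁻¹ * V = W := by
  have hWunit : IsUnit W := isUnit_of_mul_isUnit_left (hW ▸ hV)
  rw [← hW]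
  exact Matrix.nonsing_inv_mul_cancel_left W W (W.isUnit_iff_isUnit_det.1 hWunit)

variable {𝕜 : Type*} [RCLike 𝕜]

theorem Matrix.toEuclideanCLM_inv_apply_eq_add {W V : Matrix n n 𝕜} (hW : W * W = V)
    (hV : IsUnit V) (S : Matrix n n 𝕜) (d x : EuclideanSpace 𝕜 n) :
    toEuclideanCLM (𝕜 := 𝕜) W⁻¹ d =
      toEuclideanCLM (𝕜 := 𝕜) W⁻¹ (d - toEuclideanCLM (𝕜 := 𝕜) V x)
        + toEuclideanCLM (𝕜 := 𝕜) (W - S) x + toEuclideanCLM (𝕜 := 𝕜) S x := by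
  have hWV : toEuclideanCLM (𝕜 := 𝕜) W⁻¹ (toEuclideanCLM (𝕜 := 𝕜) V x) =
      toEuclideanCLM (𝕜 := 𝕜) W x := by
    rw [← ContinuousLinearMap.comp_apply, ← ContinuousLinearMap.mul_def, ← map_mul,
      Matrix.inv_mul_eq_of_mul_self_eq hW hV]
  rw [map_sub, hWV, map_sub, _root_.sub_apply]
  abel

end MatrixSquareRoot

theorem TendstoUniformlyOn.clm_apply_of_zero {ι α R E F : Type*} [Semiring R]
    [AddCommGroup E] [UniformSpace E] [IsUniformAddGroup E] [Module R E]
    [AddCommGroup F] [UniformSpace F] [IsUniformAddGroup F] [Module R F]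
    {l : Filter ι} {s : Set α} {G : ι → α → E} (hG : TendstoUniformlyOn G 0 l s) (L : E →L[R] F) :
    TendstoUniformlyOn (fun n t => L (G n t)) 0 l s := by
  simpa [Function.comp_def, Pi.zero_def] using L.uniformContinuous.comp_tendstoUniformlyOn hG

theorem stmt0_general (p : ℕ)
    (S : Matrix (Fin p) (Fin p) ℝ)
    (β : ℝ → EuclideanSpace ℝ (Fin p)) (hβ : ContinuousOn β (Set.Icc 0 1))
    (β₀ : EuclideanSpace ℝ (Fin p))
    (k : ℕ → ℕ) (hk : Tendsto k atTop atTop)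
    (V : ℕ → ℕ → Matrix (Fin p) (Fin p) ℝ)
    (hV : ∀ n i, 1 ≤ i → i ≤ k n → (V n i).PosDef)
    (W : ℕ → ℕ → Matrix (Fin p) (Fin p) ℝ)
    (hWsq : ∀ n i, 1 ≤ i → i ≤ k n → W n i * W n i = V n i)
    (K : ℝ)
    (hK : ∀ n i, 1 ≤ i → i ≤ k n → ‖Matrix.toEuclideanCLM (𝕜 := ℝ) ((W n i)⁻¹)‖ ≤ K)
    (hWconv : ∀ ε > (0:ℝ), ∃ N, ∀ n ≥ N, ∀ i, 1 ≤ i → i ≤ k n →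
      ‖Matrix.toEuclideanCLM (𝕜 := ℝ) (W n i - S)‖ < ε)
    (M : ℕ → ℝ) (hM : Tendsto M atTop (nhds 0))
    (d : ℕ → ℕ → EuclideanSpace ℝ (Fin p))
    (hd : ∀ n i, 1 ≤ i → i ≤ k n →
      ‖d n i - Matrix.toEuclideanCLM (𝕜 := ℝ) (V n i) (β ((i : ℝ) / (k n : ℝ)) - β₀)‖ ≤
        M n / 2 * ‖β ((i : ℝ) / (k n : ℝ)) - β₀‖ ^ 2) :
    TendstoUniformlyOn
      (fun n t =>
        ((k n : ℝ))⁻¹ • ∑ i ∈ Finset.Icc 1 ⌊t * (k n : ℝ)⌋₊,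
            Matrix.toEuclideanCLM (𝕜 := ℝ) ((W n i)⁻¹) (d n i)
          - Matrix.toEuclideanCLM (𝕜 := ℝ) S (∫ s in (0:ℝ)..t, (β s - β₀)))
      0 atTop (Set.Icc 0 1) := by
  set x : ℝ → EuclideanSpace ℝ (Fin p) := fun s => β s - β₀
  have hx : ContinuousOn x (Set.Icc 0 1) := hβ.sub continuousOn_const
  obtain ⟨B, hB0, hB⟩ := (isCompact_Icc.image_of_continuousOn hx).isBounded.exists_pos_norm_le
  have hxi (n i : ℕ) (hi : i ≤ k n) : ‖x (i / k n)‖ ≤ B := hB _ <| Set.mem_image_of_mem x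
    ⟨by positivity, div_le_one_of_le₀ (Nat.cast_le.2 hi) (Nat.cast_nonneg _)⟩
  have hremainder := tendstoUniformlyOn_average_of_eventually_norm_le (k := k)
      (a := fun n i => Matrix.toEuclideanCLM (𝕜 := ℝ) (W n i)⁻¹
        (d n i - Matrix.toEuclideanCLM (𝕜 := ℝ) (V n i) (x (i / k n)))) fun ε hε => by
    have hc : Tendsto (fun n => K * (|M n| / 2 * B ^ 2)) atTop (nhds 0) := by
      simpa using ((hM.abs.div_const 2).mul_const (B ^ 2)).const_mul K
    filter_upwards [hc.eventually_le_const hε] with n hn i h1 h2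
    refine (ContinuousLinearMap.le_of_opNorm_le_of_le _ (hK n i h1 h2)
      ((hd n i h1 h2).trans ?_)).trans hn
    gcongr ?_ / 2 * ?_ ^ 2
    exacts [le_abs_self _, hxi n i h2]
  have hsqrt := tendstoUniformlyOn_average_of_eventually_norm_le (k := k)
      (a := fun n i => Matrix.toEuclideanCLM (𝕜 := ℝ) (W n i - S) (x (i / k n))) fun ε hε => by
    obtain ⟨N, hN⟩ := hWconv (ε / B) (div_pos hε hB0)
    filter_upwards [eventually_ge_atTop N] with n hn i h1 h2
    exact (ContinuousLinearMap.le_of_opNorm_le_of_le _ (hN n hn i h1 h2).le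
      (hxi n i h2)).trans_eq (div_mul_cancel₀ ε hB0.ne')
  have hsum := (hremainder.add hsqrt).add
    ((tendstoUniformlyOn_riemannSum_sub_integral hx hk).clm_apply_of_zero
      (Matrix.toEuclideanCLM (𝕜 := ℝ) S))
  rw [add_zero, add_zero] at hsum
  refine hsum.congr (Eventually.of_forall fun n t ht => ?_)
  have hterm (i : ℕ) (hi : i ∈ Finset.Icc 1 ⌊t * (k n : ℝ)⌋₊) :=
    have hik := (Finset.mem_Icc.1 hi).2.trans (Nat.floor_mul_natCast_le_of_le_one ht.2 (k n))
    Matrix.toEuclideanCLM_inv_apply_eq_add (hWsq n i (Finset.mem_Icc.1 hi).1 hik)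
      (hV n i (Finset.mem_Icc.1 hi).1 hik).isUnit S (d n i) (x (i / k n))
  simp only [Pi.add_apply]
  rw [Finset.sum_congr rfl hterm]
  simp only [Finset.sum_add_distrib, smul_add, map_sub, map_smul, map_sum]
  abel

/-- deterministic core of the drift convergence in Theorem 1.
`Sig` is a symmetric positive definite `p × p` matrix with positive semidefinite
square root `S` (so `S * S = Sig`); for each `n` and `1 ≤ i ≤ k n`, `W n i` is the
positive semidefinite square root of the positive definite matrix `V n i`, and
`(W n i)⁻¹ = (V n i)^{-1/2}`.  Matrix norms are the operator norms induced by the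
Euclidean norm, via `Matrix.toEuclideanCLM`. -/
theorem stmt0 (p : ℕ)
    (Sig : Matrix (Fin p) (Fin p) ℝ) (hSigsymm : Sig.IsSymm) (hSig : Sig.PosDef)
    (S : Matrix (Fin p) (Fin p) ℝ) (hS : S.PosSemidef) (hSsq : S * S = Sig)
    (β : ℝ → EuclideanSpace ℝ (Fin p)) (hβ : ContinuousOn β (Set.Icc 0 1))
    (β₀ : EuclideanSpace ℝ (Fin p))
    (k : ℕ → ℕ) (hk : Tendsto k atTop atTop)
    (V : ℕ → ℕ → Matrix (Fin p) (Fin p) ℝ)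
    (hVsymm : ∀ n i, 1 ≤ i → i ≤ k n → (V n i).IsSymm)
    (hV : ∀ n i, 1 ≤ i → i ≤ k n → (V n i).PosDef)
    (W : ℕ → ℕ → Matrix (Fin p) (Fin p) ℝ)
    (hWpsd : ∀ n i, 1 ≤ i → i ≤ k n → (W n i).PosSemidef)
    (hWsq : ∀ n i, 1 ≤ i → i ≤ k n → W n i * W n i = V n i)
    (K : ℝ)
    (hK : ∀ n i, 1 ≤ i → i ≤ k n → ‖Matrix.toEuclideanCLM (𝕜 := ℝ) ((W n i)⁻¹)‖ ≤ K)
    (hWconv : ∀ ε > (0:ℝ), ∃ N, ∀ n ≥ N, ∀ i, 1 ≤ i → i ≤ k n →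
      ‖Matrix.toEuclideanCLM (𝕜 := ℝ) (W n i - S)‖ < ε)
    (M : ℕ → ℝ) (hM0 : ∀ n, 0 ≤ M n) (hM : Tendsto M atTop (nhds 0))
    (d : ℕ → ℕ → EuclideanSpace ℝ (Fin p))
    (hd : ∀ n i, 1 ≤ i → i ≤ k n →
      ‖d n i - Matrix.toEuclideanCLM (𝕜 := ℝ) (V n i) (β ((i : ℝ) / (k n : ℝ)) - β₀)‖ ≤
        M n / 2 * ‖β ((i : ℝ) / (k n : ℝ)) - β₀‖ ^ 2) :
    TendstoUniformlyOn
      (fun n t =>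
        ((k n : ℝ))⁻¹ • ∑ i ∈ Finset.Icc 1 ⌊t * (k n : ℝ)⌋₊,
            Matrix.toEuclideanCLM (𝕜 := ℝ) ((W n i)⁻¹) (d n i)
          - Matrix.toEuclideanCLM (𝕜 := ℝ) S (∫ s in (0:ℝ)..t, (β s - β₀)))
      0 atTop (Set.Icc 0 1) :=
  stmt0_general p S β hβ β₀ k hk V hV W hWsq K hK hWconv M hM d hd
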